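/- With notation as above, the Poincaré series J(t) = Σ jₙ tⁿ of the kernel J of the derivation d on ℚ[x₁, x₂, ...] satisfies J(t) = (1 - t)·A(t) + t, where A(t) = ∏_{k≥1} 1/(1 - t^k) is the generating function of partitions; equivalently J(t) = ∏_{k≥2} 1/(1 - t^k) + t. -/

import Mathlib

open MvPolynomial

/-- The derivation `d` on `A = ℚ[x₁, x₂, …]` (with `X i` standing for `x_{i+1}`)
determined by `d x₁ = 0` and `d xₙ = x_{n-1}` for `n ≥ 2`. -/
noncomputable def dDer : Derivation ℚ (MvPolynomial ℕ ℚ) (MvPolynomial ℕ ℚ) :=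
  MvPolynomial.mkDerivation ℚ (fun i => if i = 0 then 0 else X (i - 1))

/-- The degree-`n` graded piece `Aₙ` of `A` (where `xₙ = X (n-1)` has degree `n`). -/
noncomputable def Apiece (n : ℕ) : Submodule ℚ (MvPolynomial ℕ ℚ) :=
  weightedHomogeneousSubmodule ℚ (fun i : ℕ => i + 1) n

/-- The degree-`n` graded piece `Jₙ` of `J = ker d`. -/
noncomputable def Jpiece (n : ℕ) : Submodule ℚ (MvPolynomial ℕ ℚ) :=
  Apiece n ⊓ LinearMap.ker dDer.toLinearMap

/-- `jₙ = dim_ℚ Jₙ`. -/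
noncomputable def jDim (n : ℕ) : ℕ := Module.finrank ℚ (Jpiece n)

/-!
The monomials of weight `n` form a basis of `Aₙ` indexed by the partitions of `n`, so
`dim Aₙ = p(n)`. The derivation `d` lowers the weight by one and maps `Aₙ₊₁` onto `Aₙ` for
`n ≥ 1`, so rank–nullity gives `jₙ₊₁ = p(n+1) - p(n)` for `n ≥ 1`; on `A₀` and `A₁` (spanned by
`1` and `x₁`) `d` vanishes, so `j₀ = j₁ = 1`.
-/

namespace MvPolynomial

variable {R σ : Type*} [CommSemiring R]

lemma mem_of_forall_monomial_one_mem {S : Submodule R (MvPolynomial σ R)}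
    {p : MvPolynomial σ R} (h : ∀ v ∈ p.support, monomial v 1 ∈ S) : p ∈ S := by
  rw [← p.support_sum_monomial_coeff]
  refine S.sum_mem fun v hv => ?_
  simpa [smul_monomial] using S.smul_mem (coeff v p) (h v hv)

lemma mem_support_of_mem_support_X_mul {j : σ} {q : MvPolynomial σ R} {v : σ →₀ ℕ}
    (hv : v ∈ (X j * q).support) : j ∈ v.support := by
  classical
  by_contra h
  exact mem_support_iff.mp hv (by simp [coeff_X_mul', h])

lemma derivation_mem_weightedHomogeneousSubmodule_pred
    (D : Derivation R (MvPolynomial σ R) (MvPolynomial σ R)) {w : σ → ℕ}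
    (hw : ∀ i, 0 < w i)
    (hD : ∀ i, D (X i) ∈ weightedHomogeneousSubmodule R w (w i - 1)) {n : ℕ}
    {p : MvPolynomial σ R} (hp : p ∈ weightedHomogeneousSubmodule R w n) :
    D p ∈ weightedHomogeneousSubmodule R w (n - 1) := by
  have hD_eq : D = mkDerivation R (fun i => D (X i)) := derivation_ext fun i => by simp
  refine mem_of_forall_monomial_one_mem
    (S := (weightedHomogeneousSubmodule R w (n - 1)).comap D.toLinearMap) fun v hv => ?_
  have hv : Finsupp.weight w v = n := hp (mem_support_iff.mp hv)
  change D (monomial v 1) ∈ weightedHomogeneousSubmodule R w (n - 1)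
  rw [hD_eq, mkDerivation_monomial, one_smul]
  refine Submodule.sum_mem _ fun i hi => ?_
  dsimp only
  have hsplit : Finsupp.weight w (v - Finsupp.single i 1) + w i = n := by
    have hle : Finsupp.single i 1 ≤ v :=
      Finsupp.single_le_iff.mpr (Nat.one_le_iff_ne_zero.mpr (Finsupp.mem_support_iff.mp hi))
    rw [← hv, ← tsub_add_cancel_of_le hle, map_add, add_tsub_cancel_right,
      Finsupp.weight_single, one_smul]
  rw [smul_eq_mul, mem_weightedHomogeneousSubmodule]
  convert (isWeightedHomogeneous_monomial w _ (v i : R) rfl).mul (hD i) using 1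
  have := hw i
  omega

end MvPolynomial

local notation "wt" => Finsupp.weight (fun i : ℕ => i + 1)

lemma sum_map_add_one_toMultiset (u : ℕ →₀ ℕ) :
    ((Finsupp.toMultiset u).map (· + 1)).sum = wt u := by
  simp [Finsupp.toMultiset_apply, Finsupp.weight_apply, Finsupp.sum, Multiset.sum_sum, mul_add,
    Finset.sum_add_distrib, Multiset.sum_nsmul]

lemma Multiset.map_add_one_map_sub_one {s : Multiset ℕ} (hs : ∀ x ∈ s, 0 < x) :
    (s.map (· - 1)).map (· + 1) = s := by
  conv_rhs => rw [← s.map_id]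
  rw [Multiset.map_map]
  exact Multiset.map_congr rfl fun x hx => Nat.sub_add_cancel (hs x hx)

/-- The monomial `∏ x_{i+1}^{u i}` corresponds to the partition with `u i` parts equal to
`i + 1`. -/
noncomputable def weightEquivPartition (n : ℕ) :
    {u : ℕ →₀ ℕ | wt u = n} ≃ Nat.Partition n where
  toFun u := ⟨(Finsupp.toMultiset u.1).map (· + 1), by simp, by
    rw [sum_map_add_one_toMultiset, u.2]⟩
  invFun p := ⟨Multiset.toFinsupp (p.parts.map (· - 1)), by
    rw [Set.mem_ofPred_eq, ← sum_map_add_one_toMultiset, Multiset.toFinsupp_toMultiset,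
      Multiset.map_add_one_map_sub_one fun _ => p.parts_pos, p.parts_sum]⟩
  left_inv u := by
    ext : 1
    simp [Multiset.map_map]
  right_inv p := by
    ext : 1
    simp only [Multiset.toFinsupp_toMultiset]
    exact Multiset.map_add_one_map_sub_one fun _ => p.parts_pos

noncomputable instance (n : ℕ) : Fintype {u : ℕ →₀ ℕ | wt u = n} :=
  .ofEquiv _ (weightEquivPartition n).symm

noncomputable def apieceEquivFinsupp (n : ℕ) :
    Apiece n ≃ₗ[ℚ] ({u : ℕ →₀ ℕ | wt u = n} →₀ ℚ) :=
  (LinearEquiv.ofEq _ _ (weightedHomogeneousSubmodule_eq_finsupp_supported _ _ _)).trans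
    (AddMonoidAlgebra.supportedEquivFinsupp _)

instance (n : ℕ) : FiniteDimensional ℚ (Apiece n) :=
  .equiv (apieceEquivFinsupp n).symm

lemma finrank_Apiece (n : ℕ) :
    Module.finrank ℚ (Apiece n) = Fintype.card (Nat.Partition n) := by
  rw [(apieceEquivFinsupp n).finrank_eq, Module.finrank_finsupp_self]
  exact Fintype.card_congr (weightEquivPartition n)

lemma monomial_mem_Apiece {u : ℕ →₀ ℕ} : monomial u (1 : ℚ) ∈ Apiece (wt u) :=
  isWeightedHomogeneous_monomial _ _ _ rfl

lemma dDer_X_zero : dDer (X 0) = 0 := by simp [dDer]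

lemma dDer_X_succ (i : ℕ) : dDer (X (i + 1)) = X i := by simp [dDer]

lemma dDer_mem_Apiece_pred {n : ℕ} {p : MvPolynomial ℕ ℚ} (hp : p ∈ Apiece n) :
    dDer p ∈ Apiece (n - 1) := by
  refine derivation_mem_weightedHomogeneousSubmodule_pred dDer (fun i => i.succ_pos)
    (fun i => ?_) hp
  rcases i with _ | i
  · simp [dDer_X_zero]
  · simpa [dDer_X_succ] using isWeightedHomogeneous_X ℚ (fun i : ℕ => i + 1) i

lemma dDer_eq_zero_of_mem_Apiece {n : ℕ} (hn : n ≤ 1) {p : MvPolynomial ℕ ℚ}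
    (hp : p ∈ Apiece n) : dDer p = 0 := by
  refine derivation_eq_zero_of_forall_mem_vars fun i hi => ?_
  obtain ⟨v, hv, hvi⟩ := (mem_vars_iff_mem_support i).mp hi
  have := (Finsupp.le_weight_of_ne_zero' _ (Finsupp.mem_support_iff.mp hvi)).trans_eq
    (hp (mem_support_iff.mp hv))
  obtain rfl : i = 0 := by omega
  exact dDer_X_zero

/-- With `t` the largest index in `u = u₀ + e_t`, Leibniz gives
`d (x^u₀ * X (t+1)) = x^u + X (t+1) * d x^u₀`, and every monomial of the last term has largest
index `t + 1`; so induct on the weight minus the largest index. -/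
lemma monomial_mem_map_dDer (u : ℕ →₀ ℕ) (hu : u ≠ 0) :
    monomial u (1 : ℚ) ∈ (Apiece (wt u + 1)).map dDer.toLinearMap := by
  induction hk : wt u - u.support.sup id using Nat.strong_induction_on generalizing u with
  | _ k ih =>
  obtain ⟨t, ht, hmax : u.support.sup id = t⟩ :=
    u.support.exists_mem_eq_sup (Finsupp.support_nonempty_iff.mpr hu) id
  obtain ⟨u₀, hu₀⟩ : ∃ u₀, u₀ + Finsupp.single t 1 = u :=
    ⟨_, tsub_add_cancel_of_le (Finsupp.single_le_iff.mpr
      (Nat.one_le_iff_ne_zero.mpr (Finsupp.mem_support_iff.mp ht)))⟩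
  have hlift : monomial u₀ 1 * X (t + 1) ∈ Apiece (wt u + 1) := by
    have h := congrArg wt hu₀
    rw [map_add, Finsupp.weight_single, one_smul] at h
    rw [show wt u + 1 = wt u₀ + (t + 1 + 1) by omega]
    exact (monomial_mem_Apiece (u := u₀)).mul (isWeightedHomogeneous_X ℚ _ (t + 1))
  have hleib :
      dDer (monomial u₀ 1 * X (t + 1)) = monomial u 1 + X (t + 1) * dDer (monomial u₀ 1) := by
    rw [Derivation.leibniz, dDer_X_succ, smul_eq_mul, smul_eq_mul, X, monomial_mul, one_mul, hu₀,
      mul_comm]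
  set r := X (t + 1) * dDer (monomial u₀ 1)
  have hr : r ∈ Apiece (wt u) := by
    have h := dDer_mem_Apiece_pred hlift
    rw [hleib, add_tsub_cancel_right] at h
    simpa using Submodule.sub_mem _ h monomial_mem_Apiece
  have ht_lt : t < wt u := by
    have := Finsupp.le_weight_of_ne_zero' (fun i : ℕ => i + 1) (Finsupp.mem_support_iff.mp ht)
    omega
  have hr_map : r ∈ (Apiece (wt u + 1)).map dDer.toLinearMap := by
    refine mem_of_forall_monomial_one_mem fun v hv => ?_
    have hwv : wt v = wt u := hr (mem_support_iff.mp hv)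
    have hvt : t + 1 ∈ v.support := mem_support_of_mem_support_X_mul hv
    have hsup : t + 1 ≤ v.support.sup id := Finset.le_sup (f := id) hvt
    have hlt : wt v - v.support.sup id < k := by
      rw [← hk, hwv, hmax]
      omega
    rw [← hwv]
    exact ih _ hlt v (Finsupp.support_nonempty_iff.mp ⟨_, hvt⟩) rfl
  rw [show monomial u 1 = dDer (monomial u₀ 1 * X (t + 1)) - r by rw [hleib]; ring]
  exact Submodule.sub_mem _ ⟨_, hlift, rfl⟩ hr_map

lemma map_dDer_Apiece_succ {n : ℕ} (hn : n ≠ 0) :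
    (Apiece (n + 1)).map dDer.toLinearMap = Apiece n := by
  refine le_antisymm (Submodule.map_le_iff_le_comap.mpr fun p hp => dDer_mem_Apiece_pred hp) ?_
  intro p hp
  refine mem_of_forall_monomial_one_mem fun v hv => ?_
  have hwv : wt v = n := hp (mem_support_iff.mp hv)
  subst hwv
  exact monomial_mem_map_dDer v (by rintro rfl; simp at hn)

lemma jDim_add_card_partition {n : ℕ} (hn : n ≠ 0) :
    jDim (n + 1) + Fintype.card (Nat.Partition n) = Fintype.card (Nat.Partition (n + 1)) := by
  have hrank := (dDer.toLinearMap.domRestrict (Apiece (n + 1))).finrank_range_add_finrank_ker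
  rw [LinearMap.range_domRestrict, map_dDer_Apiece_succ hn, LinearMap.ker_domRestrict,
    ← Submodule.finrank_map_subtype_eq, Submodule.map_comap_subtype, finrank_Apiece,
    finrank_Apiece] at hrank
  rw [jDim, Jpiece]
  omega

lemma jDim_of_le_one {n : ℕ} (hn : n ≤ 1) : jDim n = 1 := by
  have : Jpiece n = Apiece n :=
    inf_eq_left.mpr fun p hp => LinearMap.mem_ker.mpr (dDer_eq_zero_of_mem_Apiece hn hp)
  rw [jDim, this, finrank_Apiece]
  interval_cases n <;> rfl

/-- The Poincaré series `J(t) = Σ jₙ tⁿ` of the kernel `J` of the derivation `d`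
satisfies `J(t) = (1 - t)·A(t) + t`, where `A(t) = Σ p(n) tⁿ = ∏_{k≥1} 1/(1-t^k)`
is the generating function of partitions. -/
theorem stmt_2 :
    PowerSeries.mk (fun n => (jDim n : ℚ)) =
      (1 - PowerSeries.X) * PowerSeries.mk (fun n => (Fintype.card (Nat.Partition n) : ℚ))
        + PowerSeries.X := by
  ext n
  rcases n with _ | _ | n
  · simp [jDim_of_le_one]
  · simp [jDim_of_le_one, sub_mul, PowerSeries.coeff_succ_X_mul]
  · have := jDim_add_card_partition n.succ_ne_zero
    simp only [PowerSeries.coeff_mk, sub_mul, one_mul, map_add, map_sub,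
      PowerSeries.coeff_succ_X_mul, PowerSeries.coeff_X, Nat.add_eq_right, Nat.add_eq_zero_iff,
      one_ne_zero, and_false, ↓reduceIte, add_zero]
    rw [eq_sub_iff_add_eq]
    exact_mod_cast this
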